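/- arXiv:1803.05492 — 2 statements merged into one kernel-verified Lean document; each statement's English description precedes it below -/
import Mathlib

section
/- For every f ∈ H²(𝔻), ‖f‖_{H²} ≤ sup_{k∈ℕ} ‖σ_{1−1/k} f‖_k ≤ ‖f‖_{H²} / (1 − e^{−2})^{1/2}, where σ_r f(z) = f(rz) and ‖g‖_k = ( (1/k) Σ_{j=0}^{k−1} |g(exp(2πij/k))|² )^{1/2}. -/
open Complex

/-- The `j`-th `k`-th root of unity, `exp(2πij/k)`. -/
noncomputable def unitRoot (k j : ℕ) : ℂ :=
  Complex.exp (2 * (Real.pi : ℂ) * Complex.I * (j : ℂ) / (k : ℂ))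

/-!
Sampling `f(rz)` at the `m`-th roots of unity `ω^j` aliases its Taylor series:
`f(r ω^j) = ∑_{s<m} A_s ω^{js}` with `A_s = ∑_t c_{tm+s} r^{tm+s}`, so by the discrete Parseval
identity the squared discrete norm is `∑_{s<m} |A_s|²`. Cauchy–Schwarz along each residue class
gives `|A_s|² ≤ (1 - r^{2m})⁻¹ ∑_t |c_{tm+s}|²`, and for `r = 1 - 1/m` we have `r^{2m} ≤ e^{-2}`:
this is the upper bound. The same estimate for the exponents `≥ m` shows that `A_s → c_s` as
`m → ∞`, and lower semicontinuity of the `ℓ²` norm under coordinatewise convergence gives the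
lower bound.
-/

open ComplexConjugate Filter Topology

section CauchySchwarz

variable {ι R : Type*} [SeminormedRing R] {c d : ι → R}

lemma summable_norm_mul_of_summable_sq (hc : Summable fun i => ‖c i‖ ^ 2)
    (hd : Summable fun i => ‖d i‖ ^ 2) : Summable fun i => ‖c i * d i‖ := by
  refine ((hc.add hd).div_const 2).of_nonneg_of_le (fun i => norm_nonneg _) fun i => ?_
  linarith [two_mul_le_add_sq ‖c i‖ ‖d i‖, norm_mul_le (c i) (d i)]

lemma sq_norm_tsum_mul_le (hc : Summable fun i => ‖c i‖ ^ 2)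
    (hd : Summable fun i => ‖d i‖ ^ 2) :
    ‖∑' i, c i * d i‖ ^ 2 ≤ (∑' i, ‖c i‖ ^ 2) * ∑' i, ‖d i‖ ^ 2 := by
  have hc' : Summable fun i => ‖c i‖ ^ (2 : ℝ) := by simpa only [Real.rpow_two] using hc
  have hd' : Summable fun i => ‖d i‖ ^ (2 : ℝ) := by simpa only [Real.rpow_two] using hd
  have holder := Real.inner_le_Lp_mul_Lq_tsum_of_nonneg .two_two (fun i => norm_nonneg (c i))
    (fun i => norm_nonneg (d i)) hc' hd'
  simp only [Real.rpow_two, ← Real.sqrt_eq_rpow] at holder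
  have hprod : Summable fun i => ‖c i‖ * ‖d i‖ :=
    Real.summable_mul_of_Lp_Lq_of_nonneg .two_two (fun i => norm_nonneg _)
      (fun i => norm_nonneg _) hc' hd'
  have hle : ‖∑' i, c i * d i‖ ≤ √(∑' i, ‖c i‖ ^ 2) * √(∑' i, ‖d i‖ ^ 2) :=
    calc ‖∑' i, c i * d i‖ ≤ ∑' i, ‖c i * d i‖ :=
          norm_tsum_le_tsum_norm (summable_norm_mul_of_summable_sq hc hd)
      _ ≤ ∑' i, ‖c i‖ * ‖d i‖ :=
          (summable_norm_mul_of_summable_sq hc hd).tsum_le_tsum (fun i => norm_mul_le _ _) hprod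
      _ ≤ _ := holder
  calc ‖∑' i, c i * d i‖ ^ 2 ≤ (√(∑' i, ‖c i‖ ^ 2) * √(∑' i, ‖d i‖ ^ 2)) ^ 2 := by gcongr
    _ = _ := by
      rw [mul_pow, Real.sq_sqrt (tsum_nonneg fun i => by positivity),
        Real.sq_sqrt (tsum_nonneg fun i => by positivity)]

end CauchySchwarz

lemma tsum_eq_sum_tsum_mul_add {E : Type*} [AddCommGroup E] [UniformSpace E]
    [IsUniformAddGroup E] [CompleteSpace E] [T0Space E] (m : ℕ) [NeZero m] {g : ℕ → E}
    (hg : Summable g) : ∑' n, g n = ∑ s : Fin m, ∑' t, g (t * m + s) := by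
  have hprod : Summable fun p : ℕ × Fin m => g (p.1 * m + p.2) :=
    (Nat.divModEquiv m).symm.summable_iff.mpr hg
  calc ∑' n, g n = ∑' p : ℕ × Fin m, g (p.1 * m + p.2) := ((Nat.divModEquiv m).symm.tsum_eq g).symm
    _ = ∑' (t : ℕ) (s : Fin m), g (t * m + s) := hprod.tsum_prod
    _ = ∑' (s : Fin m) (t : ℕ), g (t * m + s) := (hprod.tsum_comm (f := fun t s => _)).symm
    _ = ∑ s : Fin m, ∑' t, g (t * m + s) := tsum_fintype _

lemma tsum_pow_mul_add_le {q : ℝ} (hq0 : 0 ≤ q) (hq1 : q < 1) {m : ℕ} (hm : m ≠ 0) (a : ℕ) :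
    ∑' t, q ^ (t * m + a) ≤ (1 - q ^ m)⁻¹ := by
  have hqm : q ^ m < 1 := pow_lt_one₀ hq0 hq1 hm
  calc ∑' t, q ^ (t * m + a) = ∑' t, q ^ a * (q ^ m) ^ t := tsum_congr fun t => by ring
    _ = q ^ a * ∑' t, (q ^ m) ^ t := tsum_mul_left
    _ = q ^ a * (1 - q ^ m)⁻¹ := by rw [tsum_geometric_of_lt_one (by positivity) hqm]
    _ ≤ (1 - q ^ m)⁻¹ := mul_le_of_le_one_left (inv_nonneg.mpr (by linarith))
        (pow_le_one₀ hq0 hq1.le)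

section PowerSeries

variable {𝕜 : Type*} [NormedDivisionRing 𝕜] {z : 𝕜}

lemma sq_norm_pow (z : 𝕜) (n : ℕ) : ‖z ^ n‖ ^ 2 = (‖z‖ ^ 2) ^ n := by
  rw [norm_pow, pow_right_comm]

lemma summable_sq_norm_pow (hz : ‖z‖ < 1) : Summable fun n => ‖z ^ n‖ ^ 2 :=
  (summable_geometric_of_lt_one (sq_nonneg ‖z‖) (by nlinarith [norm_nonneg z])).congr
    fun n => (sq_norm_pow z n).symm

lemma summable_norm_mul_pow {c : ℕ → 𝕜} (hc : Summable fun n => ‖c n‖ ^ 2) (hz : ‖z‖ < 1) :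
    Summable fun n => ‖c n * z ^ n‖ :=
  summable_norm_mul_of_summable_sq hc (summable_sq_norm_pow hz)

end PowerSeries

lemma injective_mul_add {m : ℕ} (hm : m ≠ 0) (a : ℕ) : Function.Injective fun t : ℕ => t * m + a :=
  fun _ _ h => Nat.eq_of_mul_eq_mul_right (Nat.pos_of_ne_zero hm) (Nat.add_right_cancel h)

namespace IsPrimitiveRoot

variable {ζ : ℂ} {m : ℕ} [NeZero m]

lemma sum_pow_mul_conj_pow (h : IsPrimitiveRoot ζ m) (s s' : Fin m) :
    ∑ j : Fin m, ζ ^ ((j : ℕ) * s) * conj (ζ ^ ((j : ℕ) * s')) = if s = s' then (m : ℂ) else 0 := by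
  have hζ0 : ζ ≠ 0 := h.ne_zero (NeZero.ne m)
  have hconj : conj ζ = ζ⁻¹ := (inv_eq_conj (h.norm'_eq_one (NeZero.ne m))).symm
  set ξ := ζ ^ (s : ℕ) * (ζ ^ (s' : ℕ))⁻¹
  have hterm : ∀ j : ℕ, ζ ^ (j * s) * conj (ζ ^ (j * s')) = ξ ^ j := fun j => by
    rw [map_pow, hconj, mul_pow, inv_pow, inv_pow, ← pow_mul, ← pow_mul, mul_comm j, mul_comm j]
  rw [Fin.sum_univ_eq_sum_range (fun j => ζ ^ (j * s) * conj (ζ ^ (j * s'))),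
    Finset.sum_congr rfl fun j _ => hterm j]
  split_ifs with hss'
  · simp [ξ, hss', hζ0]
  · have hξ1 : ξ ≠ 1 := fun hξ => hss' <| Fin.ext <|
      h.pow_inj s.isLt s'.isLt (mul_inv_eq_one₀ (pow_ne_zero _ hζ0) |>.mp hξ)
    have hξm : ξ ^ m = 1 := by
      rw [mul_pow, inv_pow, ← pow_mul, ← pow_mul, mul_comm _ m, mul_comm _ m, pow_mul, pow_mul,
        h.pow_eq_one, one_pow, one_pow, inv_one, mul_one]
    rw [geom_sum_eq hξ1, hξm, sub_self, zero_div]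

lemma sum_sq_norm_sum_mul_pow (h : IsPrimitiveRoot ζ m) (A : Fin m → ℂ) :
    ∑ j : Fin m, ‖∑ s : Fin m, A s * ζ ^ ((j : ℕ) * s)‖ ^ 2 = m * ∑ s, ‖A s‖ ^ 2 := by
  apply ofReal_injective
  push_cast
  simp_rw [← mul_conj', map_sum, map_mul, Finset.sum_mul_sum]
  calc ∑ j : Fin m, ∑ s, ∑ s', A s * ζ ^ ((j : ℕ) * s) * (conj (A s') * conj (ζ ^ ((j : ℕ) * s')))
      = ∑ s, ∑ s', A s * conj (A s') *
          ∑ j : Fin m, ζ ^ ((j : ℕ) * s) * conj (ζ ^ ((j : ℕ) * s')) := by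
        simp_rw [Finset.mul_sum]
        rw [Finset.sum_comm]
        refine Finset.sum_congr rfl fun s _ => ?_
        rw [Finset.sum_comm]
        exact Finset.sum_congr rfl fun s' _ => Finset.sum_congr rfl fun j _ => by ring
    _ = m * ∑ s, A s * conj (A s) := by
        simp_rw [h.sum_pow_mul_conj_pow, mul_ite, mul_zero, Finset.sum_ite_eq, Finset.mem_univ,
          if_true, Finset.mul_sum]
        exact Finset.sum_congr rfl fun s _ => by ring

end IsPrimitiveRoot

noncomputable def aliasedCoeff (c : ℕ → ℂ) (m : ℕ) (z : ℂ) (a : ℕ) : ℂ :=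
  ∑' t, c (t * m + a) * z ^ (t * m + a)

section Aliasing

variable {c : ℕ → ℂ} {m : ℕ} {z : ℂ}

lemma tsum_mul_mul_pow_eq_sum_aliasedCoeff [NeZero m] (hcz : Summable fun n => ‖c n * z ^ n‖)
    {ζ : ℂ} (hζ : ζ ^ m = 1) :
    ∑' n, c n * (z * ζ) ^ n = ∑ s : Fin m, aliasedCoeff c m z s * ζ ^ (s : ℕ) := by
  have hζ1 : ‖ζ‖ = 1 := norm_eq_one_of_pow_eq_one hζ (NeZero.ne m)
  have hsum : Summable fun n => c n * (z * ζ) ^ n := .of_norm <| by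
    simpa only [mul_pow, ← mul_assoc, norm_mul (c _ * _), norm_pow ζ, hζ1, one_pow, mul_one]
      using hcz
  rw [tsum_eq_sum_tsum_mul_add m hsum]
  refine Finset.sum_congr rfl fun s _ => ?_
  rw [aliasedCoeff, ← tsum_mul_right]
  refine tsum_congr fun t => ?_
  rw [mul_pow, pow_add ζ, pow_mul', hζ, one_pow, one_mul]
  ring

lemma sq_norm_aliasedCoeff_le (hc : Summable fun n => ‖c n‖ ^ 2) (hz : ‖z‖ < 1) (hm : m ≠ 0)
    (a : ℕ) : ‖aliasedCoeff c m z a‖ ^ 2 ≤ (1 - ‖z‖ ^ (2 * m))⁻¹ * ∑' t, ‖c (t * m + a)‖ ^ 2 := by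
  have hz2 : ‖z‖ ^ 2 < 1 := by nlinarith [norm_nonneg z]
  calc ‖aliasedCoeff c m z a‖ ^ 2
      ≤ (∑' t, ‖c (t * m + a)‖ ^ 2) * ∑' t, ‖z ^ (t * m + a)‖ ^ 2 :=
        sq_norm_tsum_mul_le (hc.comp_injective (injective_mul_add hm a))
          ((summable_sq_norm_pow hz).comp_injective (injective_mul_add hm a))
    _ ≤ (∑' t, ‖c (t * m + a)‖ ^ 2) * (1 - ‖z‖ ^ (2 * m))⁻¹ := by
        gcongr
        simpa only [sq_norm_pow, pow_mul] using tsum_pow_mul_add_le (sq_nonneg ‖z‖) hz2 hm a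
    _ = _ := mul_comm _ _

lemma sum_sq_norm_aliasedCoeff_le (hc : Summable fun n => ‖c n‖ ^ 2) (hz : ‖z‖ < 1)
    [NeZero m] : ∑ s : Fin m, ‖aliasedCoeff c m z s‖ ^ 2
      ≤ (1 - ‖z‖ ^ (2 * m))⁻¹ * ∑' n, ‖c n‖ ^ 2 := by
  rw [tsum_eq_sum_tsum_mul_add m hc, Finset.mul_sum]
  exact Finset.sum_le_sum fun s _ => sq_norm_aliasedCoeff_le hc hz (NeZero.ne m) s

lemma sqrt_sum_sq_norm_aliasedCoeff_le (hc : Summable fun n => ‖c n‖ ^ 2) (hz : ‖z‖ < 1)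
    [NeZero m] {θ : ℝ} (hθ : θ < 1) (hzm : ‖z‖ ^ (2 * m) ≤ θ) :
    √(∑ s : Fin m, ‖aliasedCoeff c m z s‖ ^ 2) ≤ √(∑' n, ‖c n‖ ^ 2) / √(1 - θ) := by
  rw [div_eq_mul_inv, ← Real.sqrt_inv, ← Real.sqrt_mul (tsum_nonneg fun n => sq_nonneg _),
    mul_comm]
  refine Real.sqrt_le_sqrt ((sum_sq_norm_aliasedCoeff_le hc hz).trans ?_)
  gcongr

lemma aliasedCoeff_eq_add (hcz : Summable fun n => ‖c n * z ^ n‖) (hm : m ≠ 0) (a : ℕ) :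
    aliasedCoeff c m z a = c a * z ^ a + aliasedCoeff c m z (a + m) := by
  have hslice : Summable fun t => c (t * m + a) * z ^ (t * m + a) :=
    (hcz.comp_injective (injective_mul_add hm a)).of_norm
  rw [aliasedCoeff, hslice.tsum_eq_zero_add, aliasedCoeff]
  simp only [zero_mul, zero_add, add_mul, one_mul, add_right_comm _ m a, add_assoc]

end Aliasing

lemma unitRoot_eq_pow (m j : ℕ) : unitRoot m j = unitRoot m 1 ^ j := by
  rw [unitRoot, unitRoot, ← Complex.exp_nat_mul]
  congr 1
  push_cast
  ring

lemma isPrimitiveRoot_unitRoot_one (m : ℕ) [NeZero m] : IsPrimitiveRoot (unitRoot m 1) m := by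
  simpa [unitRoot] using Complex.isPrimitiveRoot_exp m (NeZero.ne m)

lemma average_sq_norm_eq_sum_sq_norm_aliasedCoeff {c : ℕ → ℂ} {f : ℂ → ℂ}
    (hc : Summable fun n => ‖c n‖ ^ 2)
    (hf : ∀ w : ℂ, ‖w‖ < 1 → HasSum (fun n => c n * w ^ n) (f w)) {z : ℂ} (hz : ‖z‖ < 1)
    (m : ℕ) [NeZero m] :
    (1 / (m : ℝ)) * ∑ j : Fin m, ‖f (z * unitRoot m j)‖ ^ 2
      = ∑ s : Fin m, ‖aliasedCoeff c m z s‖ ^ 2 := by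
  have hω := isPrimitiveRoot_unitRoot_one m
  have hfj : ∀ j : Fin m, f (z * unitRoot m j)
      = ∑ s : Fin m, aliasedCoeff c m z s * unitRoot m 1 ^ ((j : ℕ) * s) := by
    intro j
    have hnorm : ‖z * unitRoot m j‖ < 1 := by
      rwa [norm_mul, unitRoot_eq_pow, norm_pow, hω.norm'_eq_one (NeZero.ne m), one_pow, mul_one]
    rw [← (hf _ hnorm).tsum_eq, unitRoot_eq_pow, tsum_mul_mul_pow_eq_sum_aliasedCoeff
      (summable_norm_mul_pow hc hz) (by rw [← pow_mul, pow_mul', hω.pow_eq_one, one_pow])]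
    simp only [← pow_mul]
  simp only [hfj, hω.sum_sq_norm_sum_mul_pow]
  rw [one_div, inv_mul_cancel_left₀ (Nat.cast_ne_zero.mpr (NeZero.ne m))]

lemma tendsto_aliasedCoeff {c : ℕ → ℂ} (hc : Summable fun n => ‖c n‖ ^ 2) {m : ℕ → ℕ}
    {z : ℕ → ℂ} (hm : Tendsto m atTop atTop) (hz : Tendsto z atTop (𝓝 1))
    (hz1 : ∀ k, ‖z k‖ < 1) {θ : ℝ} (hθ : θ < 1) (hzm : ∀ k, ‖z k‖ ^ (2 * m k) ≤ θ) (a : ℕ) :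
    Tendsto (fun k => aliasedCoeff c (m k) (z k) a) atTop (𝓝 (c a)) := by
  have hm0 : ∀ᶠ k in atTop, m k ≠ 0 := hm.eventually_ne_atTop 0
  have hbound : ∀ᶠ k in atTop, ‖aliasedCoeff c (m k) (z k) (a + m k)‖
      ≤ √((1 - θ)⁻¹ * ∑' n, ‖c (n + m k)‖ ^ 2) := by
    filter_upwards [hm0] with k hk
    refine Real.le_sqrt_of_sq_le ((sq_norm_aliasedCoeff_le hc (hz1 k) hk _).trans ?_)
    refine mul_le_mul (inv_anti₀ (by linarith) (by linarith [hzm k])) ?_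
      (tsum_nonneg fun t => sq_nonneg _) (inv_nonneg.mpr (by linarith))
    simpa only [Function.comp_def, add_assoc] using tsum_comp_le_tsum_of_inj
        (hc.comp_injective (add_left_injective (m k))) (fun n => sq_nonneg _)
        (injective_mul_add hk a)
  have htail : Tendsto (fun k => aliasedCoeff c (m k) (z k) (a + m k)) atTop (𝓝 0) := by
    refine squeeze_zero_norm' hbound ?_
    simpa using (((tendsto_sum_nat_add fun n => ‖c n‖ ^ 2).comp hm).const_mul _).sqrt
  have hmain : Tendsto (fun k => c a * z k ^ a + aliasedCoeff c (m k) (z k) (a + m k)) atTop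
      (𝓝 (c a)) := by
    simpa using (tendsto_const_nhds.mul (hz.pow a)).add htail
  refine hmain.congr' ?_
  filter_upwards [hm0] with k hk
  exact (aliasedCoeff_eq_add (summable_norm_mul_pow hc (hz1 k)) hk a).symm

lemma tsum_sq_norm_le_of_tendsto {E : Type*} [SeminormedAddCommGroup E] {A : ℕ → ℕ → E}
    {c : ℕ → E} {m : ℕ → ℕ} (hm : Tendsto m atTop atTop)
    (hA : ∀ s, Tendsto (fun k => A k s) atTop (𝓝 (c s))) {B : ℝ}
    (hB : ∀ k, ∑ s : Fin (m k), ‖A k s‖ ^ 2 ≤ B) : ∑' s, ‖c s‖ ^ 2 ≤ B := by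
  refine Real.tsum_le_of_sum_range_le (fun s => sq_nonneg _) fun N => ?_
  refine le_of_tendsto (tendsto_finsetSum _ fun s _ => ((hA s).norm.pow 2)) ?_
  filter_upwards [hm.eventually_ge_atTop N] with k hk
  calc ∑ s ∈ Finset.range N, ‖A k s‖ ^ 2 ≤ ∑ s ∈ Finset.range (m k), ‖A k s‖ ^ 2 :=
        Finset.sum_le_sum_of_subset_of_nonneg (Finset.range_subset_range.mpr hk)
          fun s _ _ => sq_nonneg _
    _ = ∑ s : Fin (m k), ‖A k s‖ ^ 2 := (Fin.sum_univ_eq_sum_range _ _).symm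
    _ ≤ B := hB k

lemma one_sub_one_div_pow_two_mul_le_exp_neg_two {m : ℕ} (hm : m ≠ 0) :
    (1 - 1 / (m : ℝ)) ^ (2 * m) ≤ Real.exp (-2) := by
  have hm1 : (1 : ℝ) ≤ m := by exact_mod_cast Nat.one_le_iff_ne_zero.mpr hm
  have h := Real.one_sub_div_pow_le_exp_neg (n := 2 * m) (t := 2) (by push_cast; linarith)
  rwa [Nat.cast_mul, Nat.cast_two, div_mul_cancel_left₀ two_ne_zero, ← one_div] at h

/-- Two-sided estimate:
`‖f‖_{H²} ≤ sup_k ‖σ_{1-1/k} f‖_k ≤ ‖f‖_{H²}/(1 - e⁻²)^{1/2}` for `f ∈ H²(𝔻)`. -/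
theorem two_sided_discrete_norm_estimate (c : ℕ → ℂ)
    (hc : Summable fun n => ‖c n‖ ^ 2)
    (f : ℂ → ℂ) (hf : ∀ z : ℂ, ‖z‖ < 1 → HasSum (fun n => c n * z ^ n) (f z)) :
    Real.sqrt (∑' n, ‖c n‖ ^ 2)
        ≤ (⨆ k : ℕ, Real.sqrt ((1 / ((k : ℝ) + 1)) * ∑ j : Fin (k + 1),
            ‖f (((1 - 1 / ((k : ℝ) + 1)) : ℂ) * unitRoot (k + 1) j)‖ ^ 2)) ∧
    (⨆ k : ℕ, Real.sqrt ((1 / ((k : ℝ) + 1)) * ∑ j : Fin (k + 1),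
        ‖f (((1 - 1 / ((k : ℝ) + 1)) : ℂ) * unitRoot (k + 1) j)‖ ^ 2))
      ≤ Real.sqrt (∑' n, ‖c n‖ ^ 2) / Real.sqrt (1 - Real.exp (-2)) := by
  set r : ℕ → ℝ := fun k => 1 - 1 / ((k + 1 : ℕ) : ℝ)
  have hr : ∀ k, ‖(r k : ℂ)‖ < 1 ∧ ‖(r k : ℂ)‖ ^ (2 * (k + 1)) ≤ Real.exp (-2) := fun k => by
    have hr0 : 0 ≤ r k := sub_nonneg.mpr (div_le_one_of_le₀ (by simp) (by positivity))
    rw [Complex.norm_real, Real.norm_of_nonneg hr0]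
    exact ⟨sub_lt_self _ (by positivity), one_sub_one_div_pow_two_mul_le_exp_neg_two k.succ_ne_zero⟩
  have hexp : Real.exp (-2) < 1 := Real.exp_lt_one_iff.mpr (by norm_num)
  set F : ℕ → ℝ := fun k => Real.sqrt ((1 / ((k : ℝ) + 1)) * ∑ j : Fin (k + 1),
      ‖f (((1 - 1 / ((k : ℝ) + 1)) : ℂ) * unitRoot (k + 1) j)‖ ^ 2)
  have hF : ∀ k, F k = √(∑ s : Fin (k + 1), ‖aliasedCoeff c (k + 1) (r k) s‖ ^ 2) := fun k => by
    rw [← average_sq_norm_eq_sum_sq_norm_aliasedCoeff hc hf (hr k).1]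
    simp [F, r]
  have hupper : ∀ k, F k ≤ √(∑' n, ‖c n‖ ^ 2) / √(1 - Real.exp (-2)) := fun k =>
    hF k ▸ sqrt_sum_sq_norm_aliasedCoeff_le hc (hr k).1 hexp (hr k).2
  have hbdd : BddAbove (Set.range F) := ⟨_, Set.forall_mem_range.mpr hupper⟩
  refine ⟨?_, ciSup_le hupper⟩
  have hlim : Tendsto (fun k => (r k : ℂ)) atTop (𝓝 1) := by
    simpa [r] using ((tendsto_one_div_add_atTop_nhds_zero_nat (𝕜 := ℝ)).const_sub 1).ofReal
  have hsq := tsum_sq_norm_le_of_tendsto (tendsto_add_atTop_nat 1)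
    (fun s => tendsto_aliasedCoeff hc (tendsto_add_atTop_nat 1) hlim (fun k => (hr k).1) hexp
      (fun k => (hr k).2) s) (B := (⨆ k, F k) ^ 2) fun k => by
        rw [← Real.sq_sqrt (Finset.sum_nonneg fun s _ => sq_nonneg _), ← hF]
        exact pow_le_pow_left₀ (Real.sqrt_nonneg _) (le_ciSup hbdd k) 2
  exact Real.sqrt_le_iff.mpr ⟨Real.iSup_nonneg fun k => Real.sqrt_nonneg _, hsq⟩
end

section
/- For any function g analytic on a neighborhood of the closed disk of radius r (0 < r < 1) and any k ∈ ℕ, (1/k) Σ_{j=0}^{k−1} |g(r·exp(2πij/k))|² = Σ_{l=0}^∞ | Σ_{m ≡ l mod k} c_m r^m |², where g(z) = Σ c_m z^m; in particular the discrete average over the scaled k-th roots of unity picks out sums of coefficients along arithmetic progressions mod k. -/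
/-!
Because `ω ^ k = 1` for every `k`-th root of unity `ω`, regrouping the power series of `g` by
residues mod `k` gives `g (r ω) = Σ_{l<k} a_l ω^l` with `a_l = Σ_{m ≡ l [k]} c_m r^m`: on the
scaled roots of unity `g` agrees with a polynomial of degree `< k`. For such polynomials the
`k`-point average of `|P|²` is exact, `(1/k) Σ_j |P(ζ^j)|² = Σ_l |a_l|²`, by the orthogonality
`Σ_{j<k} ζ^{nj} = k · [k ∣ n]` for a primitive `k`-th root `ζ`.
-/

open Complex

open Finset ComplexConjugate

theorem unitRoot_eq_pow_s18 (k j : ℕ) : unitRoot k j = exp (2 * Real.pi * I / k) ^ j := by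
  rw [unitRoot, ← exp_nat_mul]
  ring_nf

theorem HasSum.sum_tsum_mod_eq {α : Type*} [AddCommGroup α] [UniformSpace α]
    [IsUniformAddGroup α] [CompleteSpace α] [T2Space α] {f : ℕ → α} {a : α} (hf : HasSum f a)
    {k : ℕ} (hk : 0 < k) :
    ∑ l : Fin k, ∑' m : {m : ℕ // m % k = l}, f m = a := by
  let residue : ℕ → Fin k := fun m => ⟨m % k, Nat.mod_lt m hk⟩
  rw [← (hasSum_fintype _).unique (hf.tsum_fiberwise residue)]
  refine sum_congr rfl fun l _ => ?_
  exact (Equiv.subtypeEquivRight (p := fun m => m % k = l) (q := (· ∈ residue ⁻¹' {l}))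
    fun m => by simp [residue, Fin.ext_iff]).tsum_eq fun m => f m

theorem HasSum.eq_sum_tsum_mod_mul_pow {K : Type*} [NormedDivisionRing K] [CompleteSpace K]
    {f : ℕ → K} {w s : K} {k : ℕ} (h : HasSum (fun m => f m * w ^ m) s) (hk : 0 < k)
    (hw : w ^ k = 1) :
    s = ∑ l : Fin k, (∑' m : {m : ℕ // m % k = l}, f m) * w ^ (l : ℕ) := by
  rw [← h.sum_tsum_mod_eq hk]
  refine sum_congr rfl fun l _ => ?_
  rw [← tsum_mul_right]
  refine tsum_congr fun m => ?_
  rw [pow_eq_pow_mod m hw, m.2]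

theorem IsPrimitiveRoot.sum_range_zpow_mul_eq_ite {K : Type*} [Field K] {ζ : K} {k : ℕ}
    (hζ : IsPrimitiveRoot ζ k) (n : ℤ) :
    ∑ j ∈ range k, ζ ^ (n * j) = if (k : ℤ) ∣ n then (k : K) else 0 := by
  split_ifs with hn
  · have hone : ∀ j : ℕ, ζ ^ (n * j) = 1 := fun j =>
      (hζ.zpow_eq_one_iff_dvd _).mpr (hn.mul_right _)
    simp [hone]
  · have hne : ζ ^ n ≠ 1 := fun h => hn ((hζ.zpow_eq_one_iff_dvd n).mp h)
    have hk : (ζ ^ n) ^ k = 1 := by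
      rw [← zpow_natCast, ← zpow_mul, mul_comm, zpow_mul, zpow_natCast, hζ.pow_eq_one, one_zpow]
    simp only [zpow_mul, zpow_natCast]
    rw [geom_sum_eq hne, hk, sub_self, zero_div]

theorem IsPrimitiveRoot.sum_sq_norm_sum_mul_pow_s18 {ζ : ℂ} {k : ℕ} (hζ : IsPrimitiveRoot ζ k)
    (a : Fin k → ℂ) :
    ∑ j : Fin k, ‖∑ l : Fin k, a l * (ζ ^ (j : ℕ)) ^ (l : ℕ)‖ ^ 2 =
      k * ∑ l : Fin k, ‖a l‖ ^ 2 := by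
  rcases k.eq_zero_or_pos with rfl | hk
  · simp
  have hconj : conj ζ = ζ⁻¹ := (inv_eq_conj (hζ.norm'_eq_one hk.ne')).symm
  have hterm : ∀ j l l' : ℕ, (ζ ^ j) ^ l * conj ((ζ ^ j) ^ l') = ζ ^ (((l : ℤ) - l') * j) := by
    intro j l l'
    rw [map_pow, map_pow, hconj, sub_mul, zpow_sub₀ (hζ.ne_zero hk.ne'), inv_pow, inv_pow,
      ← div_eq_mul_inv]
    norm_cast
    ring
  have horth : ∀ l l' : Fin k,
      ∑ j : Fin k, ζ ^ (((l : ℤ) - l') * (j : ℕ)) = if l = l' then (k : ℂ) else 0 := by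
    intro l l'
    rw [Fin.sum_univ_eq_sum_range (fun j : ℕ => ζ ^ (((l : ℤ) - l') * j)),
      hζ.sum_range_zpow_mul_eq_ite]
    refine if_congr ⟨fun h => ?_, fun h => by simp [h]⟩ rfl rfl
    have := Int.eq_zero_of_abs_lt_dvd h (by rw [abs_lt]; omega)
    omega
  apply Complex.ofReal_injective
  push_cast
  simp only [← mul_conj']
  calc ∑ j : Fin k, (∑ l : Fin k, a l * (ζ ^ (j : ℕ)) ^ (l : ℕ)) *
        conj (∑ l : Fin k, a l * (ζ ^ (j : ℕ)) ^ (l : ℕ))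
      = ∑ j : Fin k, ∑ l : Fin k, ∑ l' : Fin k,
          a l * conj (a l') * ((ζ ^ (j : ℕ)) ^ (l : ℕ) * conj ((ζ ^ (j : ℕ)) ^ (l' : ℕ))) := by
        refine sum_congr rfl fun j _ => ?_
        simp only [map_sum, map_mul, sum_mul_sum]
        exact sum_congr rfl fun l _ => sum_congr rfl fun l' _ => by ring
    _ = ∑ l : Fin k, ∑ l' : Fin k,
          a l * conj (a l') * ∑ j : Fin k, ζ ^ (((l : ℤ) - l') * (j : ℕ)) := by
        simp only [hterm, mul_sum]
        rw [sum_comm]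
        exact sum_congr rfl fun l _ => sum_comm
    _ = k * ∑ l : Fin k, a l * conj (a l) := by
        simp [horth, mul_sum, mul_comm]

theorem discrete_average_arithmetic_progressions_general
    (c : ℕ → ℂ) (g : ℂ → ℂ) (r : ℝ) (hr0 : 0 < r)
    (hg : ∃ R : ℝ, r < R ∧ ∀ z : ℂ, ‖z‖ < R → HasSum (fun m => c m * z ^ m) (g z))
    (k : ℕ) (hk : 0 < k) :
    (1 / (k : ℝ)) * ∑ j : Fin k, ‖g ((r : ℂ) * unitRoot k j)‖ ^ 2
      = ∑ l : Fin k, ‖∑' m : {m : ℕ // m % k = (l : ℕ)}, c m * (r : ℂ) ^ (m : ℕ)‖ ^ 2 := by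
  obtain ⟨R, hrR, hR⟩ := hg
  obtain ⟨ζ, hζ, hroot⟩ : ∃ ζ : ℂ, IsPrimitiveRoot ζ k ∧ ∀ j, unitRoot k j = ζ ^ j :=
    ⟨_, isPrimitiveRoot_exp k hk.ne', unitRoot_eq_pow_s18 k⟩
  have hg_root (j : ℕ) : g (r * ζ ^ j) = ∑ l : Fin k,
      (∑' m : {m : ℕ // m % k = l}, c m * (r : ℂ) ^ (m : ℕ)) * (ζ ^ j) ^ (l : ℕ) := by
    have hz : ‖(r : ℂ) * ζ ^ j‖ < R := by
      rwa [norm_mul, norm_pow, hζ.norm'_eq_one hk.ne', one_pow, mul_one, norm_real,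
        Real.norm_of_nonneg hr0.le]
    have hs : HasSum (fun m => c m * (r : ℂ) ^ m * (ζ ^ j) ^ m) (g (r * ζ ^ j)) := by
      simpa only [mul_pow, mul_assoc] using hR _ hz
    exact hs.eq_sum_tsum_mod_mul_pow hk (by rw [pow_right_comm, hζ.pow_eq_one, one_pow])
  simp only [hroot, hg_root, hζ.sum_sq_norm_sum_mul_pow_s18]
  field_simp

/-- For `g` analytic on a neighborhood of the closed disk of radius `r` with
Taylor coefficients `c`, the discrete average over the scaled `k`-th roots of
unity picks out sums of coefficients along arithmetic progressions mod `k`: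
`(1/k) Σ_j |g(r ω_k^j)|² = Σ_l |Σ_{m ≡ l [k]} c_m r^m|²`. -/
theorem discrete_average_arithmetic_progressions
    (c : ℕ → ℂ) (g : ℂ → ℂ) (r : ℝ) (hr0 : 0 < r) (hr1 : r < 1)
    (hg : ∃ R : ℝ, r < R ∧ ∀ z : ℂ, ‖z‖ < R → HasSum (fun m => c m * z ^ m) (g z))
    (k : ℕ) (hk : 0 < k) :
    (1 / (k : ℝ)) * ∑ j : Fin k, ‖g ((r : ℂ) * unitRoot k j)‖ ^ 2
      = ∑ l : Fin k, ‖∑' m : {m : ℕ // m % k = (l : ℕ)}, c m * (r : ℂ) ^ (m : ℕ)‖ ^ 2 :=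
  discrete_average_arithmetic_progressions_general c g r hr0 hg k hk
end
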